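/- Let g be an egalitarian function from the k-slice S of a 3k-set to {W,T,L}, with p_T = P_{x∼U(S)}(g(x)=T) and bias b = P(g=W) − P(g=L). Define E as the weighted sum of inconsistency probabilities E = p_{WWW} + p_{LLL} + p_{WWT}/2 + p_{LLT}/2 + p_{WTT}/6 + p_{LTT}/6 over a uniform ordered partition (x₁,x₂,x₃) of V into three k-sets. Then E ≥ ((1−p_T)(5−3p_T) + 27b²)/32. -/

import Mathlib

/-- Election result symbols: Win, Tie, Loss. -/
inductive WTL | W | T | L
deriving DecidableEq

open WTL

variable {α : Type*} [DecidableEq α]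

/-- The `k`-slice of `V`. -/
def kslice (V : Finset α) (k : ℕ) : Finset (Finset α) :=
  V.powerset.filter (fun x => x.card = k)

/-- Ordered partitions of `V` into three parts of sizes `a`, `b`, `c`. -/
def triples (V : Finset α) (a b c : ℕ) : Finset (Finset α × Finset α × Finset α) :=
  (V.powerset ×ˢ V.powerset ×ˢ V.powerset).filter
    (fun p => p.1.card = a ∧ p.2.1.card = b ∧ p.2.2.card = c ∧
      Disjoint p.1 p.2.1 ∧ Disjoint p.1 p.2.2 ∧ Disjoint p.2.1 p.2.2 ∧
      p.1 ∪ p.2.1 ∪ p.2.2 = V)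

/-- An egalitarian `{W,T,L}`-valued function on the `k`-slice: for each value `X`,
the conditional probability that `g(x) = X` given `i ∈ x` is independent of `i ∈ V`. -/
def EgalitarianWTL (V : Finset α) (k : ℕ) (g : Finset α → WTL) : Prop :=
  ∀ X : WTL, ∀ i ∈ V, ∀ j ∈ V,
    ((kslice V k).filter (fun x => i ∈ x ∧ g x = X)).card
      = ((kslice V k).filter (fun x => j ∈ x ∧ g x = X)).card

/-!
Score the outcomes by `W = 1`, `T = 1/2`, `L = 0` and let `τ` be the indicator of `T`. The
weights in `E` are chosen so that the inconsistency of `{a, b, c}` equals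
`1 - Σ score + Σ_{pairs} score * score - Σ_{pairs} τ * τ / 12`; hence `E` only involves the mean
of the score and the quadratic forms `Σ_{x ∩ y = ∅} f x * f y` of the Kneser graph on the slice,
for `f = score ∘ g` and `f = τ ∘ g`. The `τ` form is at most `p_T` times its trivial maximum. For
the score, egalitarianism says exactly that `score ∘ g` minus its mean is orthogonal to all
functions of degree at most one. In the basis of indicators of `{x ⊇ R}` the Kneser operator is
triangular, with eigenvalue `(-1)^d * C(2k - d, k - d)` on the degree-`d` part, and this is at
least `-C(2k, k) / 8` for `d ≥ 2`. The resulting lower bound on the score form gives the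
inequality after an elementary computation, with slack `3 p_T (1 - p_T) / 32`.
-/

open Finset
open scoped RealInnerProductSpace

section Slice

variable {β : Type*} {V x : Finset β} {k : ℕ}

lemma mem_kslice : x ∈ kslice V k ↔ x ⊆ V ∧ x.card = k := by
  simp [kslice]

lemma kslice_eq_powersetCard (V : Finset β) (k : ℕ) : kslice V k = V.powersetCard k := by
  ext x; simp [mem_kslice]

end Slice

section DisjointSlice

variable {V x R : Finset α} {k : ℕ}

lemma card_filter_disjoint_superset (hx : x ∈ kslice V k) (hR : R ⊆ V) (hRk : R.card ≤ k) :
    #{y ∈ kslice V k | Disjoint x y ∧ R ⊆ y}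
      = if Disjoint R x then (V.card - k - R.card).choose (k - R.card) else 0 := by
  obtain ⟨hxV, hxk⟩ := mem_kslice.mp hx
  split_ifs with hRx
  · have hfilter : {y ∈ kslice V k | Disjoint x y ∧ R ⊆ y}
        = ((V \ x).powersetCard k).filter (R ⊆ ·) := by
      ext y
      simp only [mem_filter, mem_kslice, mem_powersetCard, subset_sdiff, disjoint_comm (a := x)]
      tauto
    rw [hfilter, card_filter_powersetCard_subset _ _ _ (subset_sdiff.mpr ⟨hR, hRx⟩) hRk,
      card_sdiff_of_subset hxV, hxk]
  · refine card_eq_zero.mpr (filter_eq_empty_iff.mpr fun y _ ⟨hxy, hRy⟩ => hRx ?_)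
    exact (hxy.mono_right hRy).symm

lemma card_filter_disjoint (hx : x ∈ kslice V k) :
    #{y ∈ kslice V k | Disjoint x y} = (V.card - k).choose k := by
  simpa using card_filter_disjoint_superset hx (empty_subset V) (Nat.zero_le k)

lemma sum_sum_filter_mem {M : Type*} [AddCommMonoid M] (f : Finset α → M) :
    ∑ i ∈ V, ∑ x ∈ kslice V k with i ∈ x, f x = k • ∑ x ∈ kslice V k, f x := by
  simp_rw [sum_filter]
  rw [sum_comm, smul_sum]
  refine sum_congr rfl fun x hx => ?_
  obtain ⟨hxV, hxk⟩ := mem_kslice.mp hx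
  rw [sum_ite_mem, inter_eq_right.mpr hxV, sum_const, hxk]

end DisjointSlice

lemma sum_powerset_neg_one_pow_mul_ite_subset (R x : Finset α) :
    ∑ R' ∈ R.powerset, (-1 : ℝ) ^ R'.card * (if R' ⊆ x then 1 else 0)
      = if Disjoint R x then 1 else 0 := by
  have hfilter : {R' ∈ R.powerset | R' ⊆ x} = (R ∩ x).powerset := by
    ext R'; simp only [mem_filter, mem_powerset, subset_inter_iff]
  have hdisj : (if R ∩ x = ∅ then (1 : ℤ) else 0) = if Disjoint R x then 1 else 0 := by
    simp [disjoint_iff_inter_eq_empty]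
  simp only [mul_ite, mul_one, mul_zero]
  rw [← sum_filter, hfilter]
  exact_mod_cast sum_powerset_neg_one_pow_card.trans hdisj

def kneserEigenvalue (n k d : ℕ) : ℝ := (-1) ^ d * ((n - k - d).choose (k - d) : ℝ)

noncomputable section Kneser

variable (V : Finset α) (k : ℕ)

abbrev SliceSpace := EuclideanSpace ℝ (kslice V k)

def supersetIndicator (R : Finset α) : SliceSpace V k :=
  WithLp.toLp 2 fun x => if R ⊆ x.1 then 1 else 0

def lowDegree (d : ℕ) : Submodule ℝ (SliceSpace V k) :=
  Submodule.span ℝ (supersetIndicator V k '' {R | R ⊆ V ∧ R.card ≤ d})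

def kneserMatrix : Matrix (kslice V k) (kslice V k) ℝ :=
  Matrix.of fun x y => if Disjoint x.1 y.1 then 1 else 0

abbrev kneserOp : SliceSpace V k →ₗ[ℝ] SliceSpace V k :=
  (kneserMatrix V k).toEuclideanLin

variable {V k}

lemma inner_sliceSpace {β : Type*} {V : Finset β} {k : ℕ} (u v : SliceSpace V k) :
    ⟪u, v⟫ = ∑ x, u x * v x := by
  simp [PiLp.inner_apply, mul_comm]

lemma kneserOp_apply (u : SliceSpace V k) (x : kslice V k) :
    kneserOp V k u x = ∑ y, if Disjoint x.1 y.1 then u y else 0 := by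
  simp [Matrix.toLpLin_apply, kneserMatrix, Matrix.mulVec, dotProduct]

lemma kneserOp_isSymmetric : (kneserOp V k).IsSymmetric := by
  refine Matrix.isSymmetric_toEuclideanLin_iff.mpr (Matrix.IsHermitian.ext fun x y => ?_)
  simp [kneserMatrix, disjoint_comm]

lemma kneserOp_supersetIndicator {R : Finset α} (hR : R ⊆ V) (hRk : R.card ≤ k) :
    kneserOp V k (supersetIndicator V k R)
      = ((V.card - k - R.card).choose (k - R.card) : ℝ) •
          ∑ R' ∈ R.powerset, (-1 : ℝ) ^ R'.card • supersetIndicator V k R' := by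
  ext x
  have hlhs : kneserOp V k (supersetIndicator V k R) x
      = #{y ∈ kslice V k | Disjoint x.1 y ∧ R ⊆ y} := by
    rw [kneserOp_apply, natCast_card_filter, ← sum_coe_sort (kslice V k)]
    simp [supersetIndicator, ite_and]
  rw [hlhs, card_filter_disjoint_superset x.2 hR hRk]
  simp only [PiLp.smul_apply, WithLp.ofLp_sum, Finset.sum_apply, smul_eq_mul]
  simp only [supersetIndicator, sum_powerset_neg_one_pow_mul_ite_subset]
  split_ifs <;> simp

lemma supersetIndicator_mem_lowDegree {R : Finset α} {d : ℕ} (hR : R ⊆ V) (hRd : R.card ≤ d) :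
    supersetIndicator V k R ∈ lowDegree V k d :=
  Submodule.subset_span ⟨R, ⟨hR, hRd⟩, rfl⟩

lemma lowDegree_mono : Monotone (lowDegree V k) := fun _ _ h =>
  Submodule.span_mono (Set.image_mono fun _ hR => ⟨hR.1, hR.2.trans h⟩)

lemma supersetIndicator_self {x : Finset α} (hx : x ∈ kslice V k) :
    supersetIndicator V k x = EuclideanSpace.single ⟨x, hx⟩ 1 := by
  ext y
  have hxy : x ⊆ y.1 ↔ y = ⟨x, hx⟩ := by
    rw [Subtype.ext_iff, eq_comm]
    refine ⟨fun h => eq_of_subset_of_card_le h ?_, fun h => h ▸ subset_refl _⟩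
    rw [(mem_kslice.mp hx).2, (mem_kslice.mp y.2).2]
  simp [supersetIndicator, hxy]

lemma lowDegree_self_eq_top : lowDegree V k k = ⊤ := by
  refine eq_top_iff.mpr ((EuclideanSpace.basisFun (kslice V k) ℝ).toBasis.span_eq.symm.le.trans ?_)
  refine Submodule.span_le.mpr (Set.range_subset_iff.mpr fun x => ?_)
  rw [OrthonormalBasis.coe_toBasis, EuclideanSpace.basisFun_apply, ← supersetIndicator_self x.2]
  exact supersetIndicator_mem_lowDegree (mem_kslice.mp x.2).1 (mem_kslice.mp x.2).2.le

lemma kneserOp_sub_smul_mem_lowDegree {d : ℕ} (hdk : d ≤ k) {v : SliceSpace V k}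
    (hv : v ∈ lowDegree V k d) :
    kneserOp V k v - kneserEigenvalue V.card k d • v ∈ lowDegree V k (d - 1) := by
  suffices h : lowDegree V k d ≤ (lowDegree V k (d - 1)).comap
      (kneserOp V k - kneserEigenvalue V.card k d • LinearMap.id) from h hv
  refine Submodule.span_le.mpr ?_
  rintro _ ⟨R, ⟨hR, hRd⟩, rfl⟩
  set c : ℝ := (((V.card - k - R.card).choose (k - R.card) : ℕ) : ℝ)
  have hsplit : kneserOp V k (supersetIndicator V k R)
        - kneserEigenvalue V.card k d • supersetIndicator V k R
      = (c * (-1) ^ R.card - kneserEigenvalue V.card k d) • supersetIndicator V k R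
        + c • ∑ R' ∈ R.powerset.erase R, (-1 : ℝ) ^ R'.card • supersetIndicator V k R' := by
    rw [kneserOp_supersetIndicator hR (hRd.trans hdk),
      ← add_sum_erase _ _ (mem_powerset_self R)]
    module
  have hlower : ∀ R' ∈ R.powerset.erase R, supersetIndicator V k R' ∈ lowDegree V k (d - 1) := by
    intro R' hR'
    obtain ⟨hne, hsub⟩ := mem_erase.mp hR'
    have hlt := card_lt_card (ssubset_of_subset_of_ne (mem_powerset.mp hsub) hne)
    exact supersetIndicator_mem_lowDegree ((mem_powerset.mp hsub).trans hR) (by omega)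
  rw [SetLike.mem_coe, Submodule.mem_comap, LinearMap.sub_apply, LinearMap.smul_apply,
    LinearMap.id_apply, hsplit]
  refine Submodule.add_mem _ ?_ (Submodule.smul_mem _ _
    (Submodule.sum_mem _ fun R' hR' => Submodule.smul_mem _ _ (hlower R' hR')))
  by_cases hRd' : R.card = d
  · simp [kneserEigenvalue, c, hRd', mul_comm]
  · exact Submodule.smul_mem _ _ (supersetIndicator_mem_lowDegree hR (by omega))

lemma kneserOp_mem_lowDegree {d : ℕ} (hdk : d ≤ k) {v : SliceSpace V k}
    (hv : v ∈ lowDegree V k d) : kneserOp V k v ∈ lowDegree V k d := by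
  have h := Submodule.add_mem _
    (lowDegree_mono (Nat.sub_le d 1) (kneserOp_sub_smul_mem_lowDegree hdk hv))
    (Submodule.smul_mem _ (kneserEigenvalue V.card k d) hv)
  rwa [sub_add_cancel] at h

lemma kneserOp_eq_smul_of_mem_orthogonal {d : ℕ} (hdk : d ≤ k) {w : SliceSpace V k}
    (hw : w ∈ lowDegree V k d) (hw' : w ∈ (lowDegree V k (d - 1))ᗮ) :
    kneserOp V k w = kneserEigenvalue V.card k d • w := by
  set z := kneserOp V k w - kneserEigenvalue V.card k d • w
  have hz : z ∈ lowDegree V k (d - 1) := kneserOp_sub_smul_mem_lowDegree hdk hw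
  have hTz := kneserOp_mem_lowDegree (by omega) hz
  rw [← sub_eq_zero, ← inner_self_eq_zero (𝕜 := ℝ)]
  calc ⟪z, z⟫ = ⟪kneserOp V k z, w⟫ - kneserEigenvalue V.card k d * ⟪z, w⟫ := by
        rw [kneserOp_isSymmetric, ← real_inner_smul_right, ← inner_sub_right]
    _ = 0 := by
        rw [Submodule.inner_right_of_mem_orthogonal hTz hw',
          Submodule.inner_right_of_mem_orthogonal hz hw', mul_zero, sub_zero]

end Kneser

lemma two_mul_choose_le_choose_succ_succ {m j : ℕ} (h : 2 * j + 1 ≤ m) :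
    2 * m.choose j ≤ (m + 1).choose (j + 1) := by
  have hrec := Nat.add_one_mul_choose_eq m j
  refine Nat.le_of_mul_le_mul_right ?_ (Nat.succ_pos j)
  calc 2 * m.choose j * (j + 1) ≤ (m + 1) * m.choose j := by nlinarith
    _ = (m + 1).choose (j + 1) * (j + 1) := hrec

lemma two_pow_mul_choose_le {m j d : ℕ} (h : 2 * j + d ≤ m) :
    2 ^ d * m.choose j ≤ (m + d).choose (j + d) := by
  induction d with
  | zero => simp
  | succ d ih =>
    calc 2 ^ (d + 1) * m.choose j = 2 * (2 ^ d * m.choose j) := by ring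
      _ ≤ 2 * (m + d).choose (j + d) := Nat.mul_le_mul_left 2 (ih (by omega))
      _ ≤ (m + (d + 1)).choose (j + (d + 1)) :=
        two_mul_choose_le_choose_succ_succ (by omega)

lemma kneserEigenvalue_ge {n k d : ℕ} (h3k : 3 * k ≤ n) (hd : 2 ≤ d) (hdk : d ≤ k) :
    -((n - k).choose k : ℝ) / 8 ≤ kneserEigenvalue n k d := by
  rcases Nat.even_or_odd d with heven | hodd
  · rw [kneserEigenvalue, heven.neg_one_pow, one_mul]
    have : (0 : ℝ) ≤ (n - k).choose k := Nat.cast_nonneg _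
    have : (0 : ℝ) ≤ (n - k - d).choose (k - d) := Nat.cast_nonneg _
    linarith
  · have h3 : 3 ≤ d := by obtain ⟨m, rfl⟩ := hodd; omega
    have hle : 2 ^ 3 * (n - k - d).choose (k - d) ≤ (n - k).choose k := by
      calc 2 ^ 3 * (n - k - d).choose (k - d) ≤ 2 ^ d * (n - k - d).choose (k - d) :=
            Nat.mul_le_mul_right _ (Nat.pow_le_pow_right (by norm_num) h3)
        _ ≤ (n - k - d + d).choose (k - d + d) := two_pow_mul_choose_le (by omega)
        _ = (n - k).choose k := by rw [Nat.sub_add_cancel (by omega), Nat.sub_add_cancel hdk]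
    rw [kneserEigenvalue, hodd.neg_one_pow]
    have : (8 : ℝ) * (n - k - d).choose (k - d) ≤ (n - k).choose k := by exact_mod_cast hle
    linarith

section KneserBound

variable {V : Finset α} {k : ℕ}

lemma inner_kneserOp_ge_of_mem_lowDegree (h3k : 3 * k ≤ V.card) {d : ℕ} (hdk : d ≤ k)
    {u : SliceSpace V k} (hu : u ∈ lowDegree V k d) (hu1 : u ∈ (lowDegree V k 1)ᗮ) :
    -((V.card - k).choose k : ℝ) / 8 * ⟪u, u⟫ ≤ ⟪u, kneserOp V k u⟫ := by
  induction d generalizing u with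
  | zero =>
    obtain rfl := Submodule.disjoint_def.mp (lowDegree V k 1).orthogonal_disjoint u
      (lowDegree_mono (Nat.zero_le 1) hu) hu1
    simp
  | succ d ih =>
    rcases Nat.eq_zero_or_pos d with rfl | hd
    · obtain rfl := Submodule.disjoint_def.mp (lowDegree V k 1).orthogonal_disjoint u hu hu1
      simp
    -- `w` is the top-degree part of `u`, an eigenvector of the Kneser operator.
    obtain ⟨v, hv, w, hw, rfl⟩ := (lowDegree V k d).exists_add_mem_mem_orthogonal u
    have hwd : w ∈ lowDegree V k (d + 1) := by
      simpa using Submodule.sub_mem _ hu (lowDegree_mono d.le_succ hv)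
    have hTw : kneserOp V k w = kneserEigenvalue V.card k (d + 1) • w :=
      kneserOp_eq_smul_of_mem_orthogonal hdk hwd hw
    have hv1 : v ∈ (lowDegree V k 1)ᗮ := by
      simpa using Submodule.sub_mem _ hu1
        (Submodule.orthogonal_le (lowDegree_mono (Nat.succ_le_of_lt hd)) hw)
    have hvw : ⟪v, w⟫ = 0 := Submodule.inner_right_of_mem_orthogonal hv hw
    have hwv : ⟪w, v⟫ = 0 := Submodule.inner_left_of_mem_orthogonal hv hw
    have hwTv : ⟪w, kneserOp V k v⟫ = 0 :=
      Submodule.inner_left_of_mem_orthogonal (kneserOp_mem_lowDegree (by omega) hv) hw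
    have heig := kneserEigenvalue_ge h3k (by omega) hdk
    have hww : 0 ≤ ⟪w, w⟫ := real_inner_self_nonneg
    have hIH := ih (by omega) hv hv1
    have hexp : ⟪v + w, kneserOp V k (v + w)⟫
        = ⟪v, kneserOp V k v⟫ + kneserEigenvalue V.card k (d + 1) * ⟪w, w⟫ := by
      rw [map_add, hTw, inner_add_left, inner_add_right, inner_add_right, real_inner_smul_right,
        real_inner_smul_right, hvw, hwTv]
      ring
    rw [hexp, inner_add_left, inner_add_right, inner_add_right, hvw, hwv]
    nlinarith [mul_le_mul_of_nonneg_right heig hww]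

lemma inner_kneserOp_ge (h3k : 3 * k ≤ V.card) (μ : ℝ) {u : SliceSpace V k}
    (hu : u - μ • supersetIndicator V k ∅ ∈ (lowDegree V k 1)ᗮ) :
    ((V.card - k).choose k : ℝ) *
        (#(kslice V k) * μ ^ 2 - (⟪u, u⟫ - #(kslice V k) * μ ^ 2) / 8)
      ≤ ⟪u, kneserOp V k u⟫ := by
  set c : ℝ := (((V.card - k).choose k : ℕ) : ℝ)
  set one := supersetIndicator V k ∅
  set u₀ := u - μ • one
  have hT1 : kneserOp V k one = c • one := by
    simpa using kneserOp_supersetIndicator (empty_subset V) (Nat.zero_le k)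
  have h11 : ⟪one, one⟫ = #(kslice V k) := by
    rw [inner_sliceSpace]
    simp [one, supersetIndicator]
  have h1u₀ : ⟪one, u₀⟫ = 0 := Submodule.inner_right_of_mem_orthogonal
    (supersetIndicator_mem_lowDegree (empty_subset V) (Nat.zero_le 1)) hu
  have hu₀1 : ⟪u₀, one⟫ = 0 := by rw [real_inner_comm, h1u₀]
  have h1Tu₀ : ⟪one, kneserOp V k u₀⟫ = 0 := by
    rw [← kneserOp_isSymmetric, hT1, real_inner_smul_left, h1u₀, mul_zero]
  have hbound := inner_kneserOp_ge_of_mem_lowDegree h3k le_rfl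
    (by simp [lowDegree_self_eq_top]) hu
  -- The constant function `one` is an eigenvector orthogonal to `u₀`: no cross terms survive.
  have hu_eq : u = u₀ + μ • one := (sub_add_cancel u _).symm
  rw [hu_eq, map_add, map_smul]
  simp only [inner_add_left, inner_add_right, real_inner_smul_left, real_inner_smul_right,
    h11, h1u₀, hu₀1, h1Tu₀, hT1]
  nlinarith

end KneserBound

def IsEgalitarian (V : Finset α) (k : ℕ) (f : Finset α → ℝ) : Prop :=
  ∀ i ∈ V, ∀ j ∈ V, ∑ x ∈ kslice V k with i ∈ x, f x = ∑ x ∈ kslice V k with j ∈ x, f x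

def kneserForm (V : Finset α) (k : ℕ) (f : Finset α → ℝ) : ℝ :=
  ∑ x ∈ kslice V k, ∑ y ∈ kslice V k with Disjoint x y, f x * f y

def toSlice (V : Finset α) (k : ℕ) (f : Finset α → ℝ) : SliceSpace V k :=
  WithLp.toLp 2 fun x => f x.1

section Egalitarian

variable {V : Finset α} {k : ℕ} {f : Finset α → ℝ}

lemma IsEgalitarian.card_mul_sum_filter_mem (hf : IsEgalitarian V k f) {i : α} (hi : i ∈ V) :
    (V.card : ℝ) * ∑ x ∈ kslice V k with i ∈ x, f x = k * ∑ x ∈ kslice V k, f x := by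
  have h := sum_sum_filter_mem (V := V) (k := k) f
  rwa [sum_congr rfl fun j hj => hf j hj i hi, sum_const, nsmul_eq_mul, nsmul_eq_mul] at h

lemma isEgalitarian_one : IsEgalitarian V k fun _ => 1 := by
  suffices h : ∀ i ∈ V,
      #{x ∈ kslice V k | i ∈ x} = if k = 0 then 0 else (V.card - 1).choose (k - 1) by
    intro i hi j hj
    simp only [sum_const, h i hi, h j hj]
  intro i hi
  split_ifs with hk
  · refine card_eq_zero.mpr (filter_eq_empty_iff.mpr fun x hx hix => ?_)
    rw [card_eq_zero.mp ((mem_kslice.mp hx).2.trans hk)] at hix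
    exact notMem_empty i hix
  · have h := card_filter_powersetCard_subset {i} V k (singleton_subset_iff.mpr hi)
      (by rw [card_singleton]; omega)
    simpa [kslice_eq_powersetCard, singleton_subset_iff] using h

lemma inner_supersetIndicator_toSlice (R : Finset α) (f : Finset α → ℝ) :
    ⟪supersetIndicator V k R, toSlice V k f⟫ = ∑ x ∈ kslice V k with R ⊆ x, f x := by
  rw [inner_sliceSpace, sum_filter, ← sum_coe_sort (kslice V k)]
  simp [supersetIndicator, toSlice]

lemma inner_toSlice_self {β : Type*} {V : Finset β} {k : ℕ} (f : Finset β → ℝ) :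
    ⟪toSlice V k f, toSlice V k f⟫ = ∑ x ∈ kslice V k, f x ^ 2 := by
  rw [inner_sliceSpace, ← sum_coe_sort (kslice V k)]
  simp [toSlice, sq]

lemma kneserForm_eq_inner (f : Finset α → ℝ) :
    kneserForm V k f = ⟪toSlice V k f, kneserOp V k (toSlice V k f)⟫ := by
  rw [inner_sliceSpace, kneserForm, ← sum_coe_sort (kslice V k)]
  refine sum_congr rfl fun x _ => ?_
  rw [kneserOp_apply, mul_sum, sum_filter, ← sum_coe_sort (kslice V k)]
  refine sum_congr rfl fun y _ => ?_
  split_ifs <;> simp [toSlice]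

lemma supersetIndicator_empty : supersetIndicator V k ∅ = toSlice V k fun _ => 1 := by
  ext x; simp [supersetIndicator, toSlice]

lemma IsEgalitarian.toSlice_sub_mem_orthogonal (hf : IsEgalitarian V k f) {μ : ℝ}
    (hμ : ∑ x ∈ kslice V k, f x = #(kslice V k) * μ) :
    toSlice V k f - μ • supersetIndicator V k ∅ ∈ (lowDegree V k 1)ᗮ := by
  rw [lowDegree, Submodule.mem_orthogonal]
  intro u hu
  induction hu using Submodule.span_induction with
  | mem u hu =>
    obtain ⟨R, ⟨hRV, hR1⟩, rfl⟩ := hu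
    rw [supersetIndicator_empty, inner_sub_right, real_inner_smul_right,
      inner_supersetIndicator_toSlice, inner_supersetIndicator_toSlice, sum_const, nsmul_one,
      sub_eq_zero]
    obtain hR | hR := Nat.le_one_iff_eq_zero_or_eq_one.mp hR1
    · rw [card_eq_zero.mp hR]
      simpa [mul_comm] using hμ
    · obtain ⟨i, rfl⟩ := card_eq_one.mp hR
      have hi : i ∈ V := singleton_subset_iff.mp hRV
      have hn : (V.card : ℝ) ≠ 0 := Nat.cast_ne_zero.mpr (card_ne_zero_of_mem hi)
      have hf_i := hf.card_mul_sum_filter_mem hi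
      have h1_i := isEgalitarian_one.card_mul_sum_filter_mem (V := V) (k := k) hi
      simp only [sum_const, nsmul_one] at h1_i
      simp only [singleton_subset_iff]
      apply mul_left_cancel₀ hn
      rw [hf_i, hμ]
      linear_combination μ * h1_i.symm
  | zero => simp
  | add u v _ _ hu hv => rw [inner_add_left, hu, hv, add_zero]
  | smul a u _ hu => rw [real_inner_smul_left, hu, mul_zero]

lemma IsEgalitarian.kneserForm_ge (h3k : 3 * k ≤ V.card) (hf : IsEgalitarian V k f) {μ : ℝ}
    (hμ : ∑ x ∈ kslice V k, f x = #(kslice V k) * μ) :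
    ((V.card - k).choose k : ℝ) *
        (#(kslice V k) * μ ^ 2 - (∑ x ∈ kslice V k, f x ^ 2 - #(kslice V k) * μ ^ 2) / 8)
      ≤ kneserForm V k f := by
  rw [kneserForm_eq_inner, ← inner_toSlice_self]
  exact inner_kneserOp_ge h3k μ (hf.toSlice_sub_mem_orthogonal hμ)

lemma kneserForm_le (hf0 : ∀ x, 0 ≤ f x) (hf1 : ∀ x, f x ≤ 1) :
    kneserForm V k f ≤ (V.card - k).choose k * ∑ x ∈ kslice V k, f x := by
  rw [kneserForm, mul_sum]
  refine sum_le_sum fun x hx => ?_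
  calc ∑ y ∈ kslice V k with Disjoint x y, f x * f y
      ≤ ∑ y ∈ kslice V k with Disjoint x y, f x :=
        sum_le_sum fun y _ => mul_le_of_le_one_right (hf0 x) (hf1 y)
    _ = (V.card - k).choose k * f x := by rw [sum_const, card_filter_disjoint hx, nsmul_eq_mul]

end Egalitarian

section Triples

variable {V : Finset α} {k : ℕ} {M : Type*} [AddCommMonoid M]

lemma mem_triples {a b c : ℕ} {q : Finset α × Finset α × Finset α} :
    q ∈ triples V a b c ↔ q.1.card = a ∧ q.2.1.card = b ∧ q.2.2.card = c ∧
      Disjoint q.1 q.2.1 ∧ Disjoint q.1 q.2.2 ∧ Disjoint q.2.1 q.2.2 ∧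
      q.1 ∪ q.2.1 ∪ q.2.2 = V := by
  refine ⟨fun h => (mem_filter.mp h).2, fun h => mem_filter.mpr ⟨?_, h⟩⟩
  obtain ⟨-, -, -, -, -, -, rfl⟩ := h
  simp only [mem_product, mem_powerset]
  exact ⟨subset_union_left.trans subset_union_left, subset_union_right.trans subset_union_left,
    subset_union_right⟩

lemma rotate_mem_triples {a b c : ℕ} {q : Finset α × Finset α × Finset α}
    (hq : q ∈ triples V a b c) : (q.2.1, q.2.2, q.1) ∈ triples V b c a := by
  obtain ⟨ha, hb, hc, hab, hac, hbc, hV⟩ := mem_triples.mp hq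
  refine mem_triples.mpr ⟨hb, hc, ha, hbc, hab.symm, hac.symm, ?_⟩
  show q.2.1 ∪ q.2.2 ∪ q.1 = V
  rw [← hV]
  ac_rfl

lemma sum_triples_rotate (F : Finset α × Finset α × Finset α → M) :
    ∑ q ∈ triples V k k k, F (q.2.1, q.2.2, q.1) = ∑ q ∈ triples V k k k, F q :=
  sum_nbij' (fun q => (q.2.1, q.2.2, q.1)) (fun q => (q.2.2, q.1, q.2.1))
    (fun _ hq => rotate_mem_triples hq) (fun _ hq => rotate_mem_triples (rotate_mem_triples hq))
    (fun _ _ => rfl) (fun _ _ => rfl) (fun _ _ => rfl)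

/-- A triple of the partition is determined by its first two parts. -/
lemma sum_triples_eq_sum_disjoint (hV : V.card = 3 * k) (F : Finset α → Finset α → M) :
    ∑ q ∈ triples V k k k, F q.1 q.2.1
      = ∑ x ∈ kslice V k, ∑ y ∈ kslice V k with Disjoint x y, F x y := by
  simp_rw [sum_filter, ← sum_product' (f := fun x y => if Disjoint x y then F x y else 0),
    ← sum_filter]
  refine sum_nbij' (fun q => (q.1, q.2.1)) (fun p => (p.1, p.2, V \ (p.1 ∪ p.2)))
    (fun q hq => ?_) (fun p hp => ?_) (fun q hq => ?_) (fun _ _ => rfl) (fun _ _ => rfl)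
  · obtain ⟨h1, h2, -, h12, -, -, hV⟩ := mem_triples.mp hq
    simp only [mem_filter, mem_product, mem_kslice, ← hV]
    exact ⟨⟨⟨subset_union_left.trans subset_union_left, h1⟩,
      ⟨subset_union_right.trans subset_union_left, h2⟩⟩, h12⟩
  · obtain ⟨⟨⟨hxV, hx⟩, ⟨hyV, hy⟩⟩, hxy⟩ := by
      simpa only [mem_filter, mem_product, mem_kslice] using hp
    have hxyV : p.1 ∪ p.2 ⊆ V := union_subset hxV hyV
    refine mem_triples.mpr ⟨hx, hy, ?_, hxy, disjoint_sdiff.mono_left subset_union_left,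
      disjoint_sdiff.mono_left subset_union_right, union_sdiff_of_subset hxyV⟩
    rw [card_sdiff_of_subset hxyV, card_union_of_disjoint hxy]
    omega
  · obtain ⟨-, -, -, -, h13, h23, hV⟩ := mem_triples.mp hq
    rw [← hV, union_sdiff_cancel_left (disjoint_union_left.mpr ⟨h13, h23⟩)]

lemma sum_triples_fst (hV : V.card = 3 * k) (f : Finset α → ℝ) :
    ∑ q ∈ triples V k k k, f q.1 = (V.card - k).choose k * ∑ x ∈ kslice V k, f x := by
  rw [sum_triples_eq_sum_disjoint hV (fun x _ => f x), mul_sum]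
  refine sum_congr rfl fun x hx => ?_
  rw [sum_const, card_filter_disjoint hx, nsmul_eq_mul]

lemma card_triples (hV : V.card = 3 * k) :
    (#(triples V k k k) : ℝ) = #(kslice V k) * (V.card - k).choose k := by
  simpa [mul_comm] using sum_triples_fst hV fun _ => 1

lemma sum_triples_add (hV : V.card = 3 * k) (f : Finset α → ℝ) :
    ∑ q ∈ triples V k k k, (f q.1 + f q.2.1 + f q.2.2)
      = 3 * ((V.card - k).choose k * ∑ x ∈ kslice V k, f x) := by
  have h2 : ∑ q ∈ triples V k k k, f q.2.1 = ∑ q ∈ triples V k k k, f q.1 :=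
    sum_triples_rotate fun q => f q.1
  have h3 : ∑ q ∈ triples V k k k, f q.2.2 = ∑ q ∈ triples V k k k, f q.1 :=
    (sum_triples_rotate fun q => f q.2.1).trans h2
  rw [sum_add_distrib, sum_add_distrib, h2, h3, sum_triples_fst hV]
  ring

lemma sum_triples_mul_add (hV : V.card = 3 * k) (f : Finset α → ℝ) :
    ∑ q ∈ triples V k k k, (f q.1 * f q.2.1 + f q.1 * f q.2.2 + f q.2.1 * f q.2.2)
      = 3 * kneserForm V k f := by
  have h23 : ∑ q ∈ triples V k k k, f q.2.1 * f q.2.2 = ∑ q ∈ triples V k k k, f q.1 * f q.2.1 :=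
    sum_triples_rotate fun q => f q.1 * f q.2.1
  have h13 : ∑ q ∈ triples V k k k, f q.1 * f q.2.2 = ∑ q ∈ triples V k k k, f q.1 * f q.2.1 :=
    (sum_congr rfl fun _ _ => mul_comm _ _).trans
      ((sum_triples_rotate fun q => f q.2.1 * f q.2.2).trans h23)
  rw [sum_add_distrib, sum_add_distrib, h13, h23,
    sum_triples_eq_sum_disjoint hV fun x y => f x * f y, kneserForm]
  ring

end Triples

namespace WTL

noncomputable def score : WTL → ℝ
  | W => 1
  | T => 1 / 2
  | L => 0

noncomputable def tie : WTL → ℝ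
  | T => 1
  | _ => 0

noncomputable def inconsistency (a b c : WTL) : ℝ :=
  (if ({a, b, c} : Multiset WTL) = {W, W, W} then 1 else 0)
    + (if ({a, b, c} : Multiset WTL) = {L, L, L} then 1 else 0)
    + (if ({a, b, c} : Multiset WTL) = {W, W, T} then 1 else 0) / 2
    + (if ({a, b, c} : Multiset WTL) = {L, L, T} then 1 else 0) / 2
    + (if ({a, b, c} : Multiset WTL) = {W, T, T} then 1 else 0) / 6
    + (if ({a, b, c} : Multiset WTL) = {L, T, T} then 1 else 0) / 6

lemma inconsistency_eq (a b c : WTL) :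
    inconsistency a b c
      = 1 - (score a + score b + score c)
        + (score a * score b + score a * score c + score b * score c)
        - (tie a * tie b + tie a * tie c + tie b * tie c) / 12 := by
  cases a <;> cases b <;> cases c <;> simp +decide [inconsistency, score, tie] <;> norm_num

end WTL

lemma sum_wtl_fiberwise {β : Type*} (s : Finset β) (g : β → WTL) (ψ : WTL → ℝ) :
    ∑ x ∈ s, ψ (g x)
      = ψ W * #{x ∈ s | g x = W} + ψ T * #{x ∈ s | g x = T} + ψ L * #{x ∈ s | g x = L} := by
  have h : ∀ x, ψ (g x) = ψ W * (if g x = W then 1 else 0) + ψ T * (if g x = T then 1 else 0)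
      + ψ L * (if g x = L then 1 else 0) := fun x => by cases g x <;> simp
  simp only [h, sum_add_distrib, ← mul_sum, sum_boole]

noncomputable def outcomeFrequency {β : Type*} (s : Finset β) (g : β → WTL) (X : WTL) : ℝ :=
  #{x ∈ s | g x = X} / #s

lemma sum_comp_eq_card_mul_outcomeFrequency {β : Type*} (s : Finset β) (g : β → WTL)
    (ψ : WTL → ℝ) :
    ∑ x ∈ s, ψ (g x) = #s * (ψ W * outcomeFrequency s g W + ψ T * outcomeFrequency s g T
      + ψ L * outcomeFrequency s g L) := by
  rcases s.eq_empty_or_nonempty with rfl | hs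
  · simp
  · have hs' : (#s : ℝ) ≠ 0 := Nat.cast_ne_zero.mpr hs.card_pos.ne'
    rw [sum_wtl_fiberwise]
    simp only [outcomeFrequency]
    field_simp

lemma outcomeFrequency_add {β : Type*} {s : Finset β} (hs : s.Nonempty) (g : β → WTL) :
    outcomeFrequency s g W + outcomeFrequency s g T + outcomeFrequency s g L = 1 := by
  have h := sum_comp_eq_card_mul_outcomeFrequency s g fun _ => 1
  rw [sum_const, nsmul_one, eq_comm, mul_eq_left₀ (Nat.cast_ne_zero.mpr hs.card_pos.ne')] at h
  simpa using h

lemma EgalitarianWTL.isEgalitarian {V : Finset α} {k : ℕ} {g : Finset α → WTL}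
    (hg : EgalitarianWTL V k g) (ψ : WTL → ℝ) : IsEgalitarian V k fun x => ψ (g x) := by
  intro i hi j hj
  simp only [sum_wtl_fiberwise, filter_filter, hg _ i hi j hj]

lemma sum_triples_inconsistency {V : Finset α} {k : ℕ} (hV : V.card = 3 * k)
    (g : Finset α → WTL) :
    ∑ q ∈ triples V k k k, inconsistency (g q.1) (g q.2.1) (g q.2.2)
      = (V.card - k).choose k * (#(kslice V k) - 3 * ∑ x ∈ kslice V k, score (g x))
        + 3 * kneserForm V k (fun x => score (g x)) - kneserForm V k (fun x => tie (g x)) / 4 := by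
  have hadd := sum_triples_add hV fun x => score (g x)
  have hscore := sum_triples_mul_add hV fun x => score (g x)
  have htie := sum_triples_mul_add hV fun x => tie (g x)
  rw [sum_congr rfl fun q _ => inconsistency_eq _ _ _, sum_sub_distrib, sum_add_distrib,
    sum_sub_distrib, ← sum_div, hadd, hscore, htie, sum_const, nsmul_eq_mul, card_triples hV]
  ring

lemma bias_bound_of_kneserForm_bounds {pW pT pL s c D Dt : ℝ} (hs : 0 < s) (hc : 0 < c)
    (hp : pW + pT + pL = 1) (hT0 : 0 ≤ pT) (hT1 : pT ≤ 1)
    (hD : c * (s * (pW + pT / 2) ^ 2 - (s * (pW + pT / 4) - s * (pW + pT / 2) ^ 2) / 8) ≤ D)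
    (hDt : Dt ≤ c * (s * pT)) :
    ((1 - pT) * (5 - 3 * pT) + 27 * (pW - pL) ^ 2) / 32
      ≤ (c * (s - 3 * (s * (pW + pT / 2))) + 3 * D - Dt / 4) / (s * c) := by
  obtain rfl : pL = 1 - pW - pT := by linarith
  rw [le_div_iff₀ (mul_pos hs hc)]
  linarith [mul_nonneg (mul_pos hs hc).le (mul_nonneg hT0 (sub_nonneg.2 hT1))]

theorem le_average_inconsistency {V : Finset α} {k : ℕ} (hV : V.card = 3 * k)
    {g : Finset α → WTL} (hg : EgalitarianWTL V k g) :
    let p := outcomeFrequency (kslice V k) g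
    ((1 - p T) * (5 - 3 * p T) + 27 * (p W - p L) ^ 2) / 32
      ≤ (∑ q ∈ triples V k k k, inconsistency (g q.1) (g q.2.1) (g q.2.2))
          / #(triples V k k k) := by
  intro p
  have hS : (kslice V k).Nonempty := by
    rw [kslice_eq_powersetCard, powersetCard_nonempty, hV]; omega
  have hs : (0 : ℝ) < #(kslice V k) := Nat.cast_pos.mpr hS.card_pos
  have hc : (0 : ℝ) < (V.card - k).choose k := Nat.cast_pos.mpr (Nat.choose_pos (by omega))
  have hp0 (X : WTL) : 0 ≤ p X := div_nonneg (Nat.cast_nonneg _) hs.le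
  have hp : p W + p T + p L = 1 := outcomeFrequency_add hS g
  have hsum := sum_comp_eq_card_mul_outcomeFrequency (kslice V k) g
  have hscore : ∑ x ∈ kslice V k, score (g x) = #(kslice V k) * (p W + p T / 2) := by
    rw [hsum]; simp only [score]; ring
  have hscore2 : ∑ x ∈ kslice V k, score (g x) ^ 2 = #(kslice V k) * (p W + p T / 4) := by
    rw [hsum fun X => score X ^ 2]; simp only [score]; ring
  have htie : ∑ x ∈ kslice V k, tie (g x) = #(kslice V k) * p T := by
    rw [hsum]; simp only [tie]; ring
  have hD := (hg.isEgalitarian score).kneserForm_ge hV.ge hscore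
  rw [hscore2] at hD
  have hDt := kneserForm_le (V := V) (k := k) (f := fun x => tie (g x))
    (fun x => by cases g x <;> norm_num [tie]) (fun x => by cases g x <;> norm_num [tie])
  rw [htie] at hDt
  rw [card_triples hV, sum_triples_inconsistency hV, hscore]
  exact bias_bound_of_kneserForm_bounds hs hc hp (hp0 T) (by linarith [hp0 W, hp0 L]) hD hDt

/-- for an egalitarian `g : S → {W,T,L}` on the `k`-slice of a `3k`-set,
with `p_T = P(g=T)`, bias `b = P(g=W) − P(g=L)`, multiset probabilities `p_{XYZ}`
over a uniform ordered partition `(x₁,x₂,x₃)` into three `k`-sets, and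
`E = p_{WWW} + p_{LLL} + p_{WWT}/2 + p_{LLT}/2 + p_{WTT}/6 + p_{LTT}/6`,
we have `E ≥ ((1−p_T)(5−3p_T) + 27b²)/32`. -/
theorem stmt11 (k : ℕ) (V : Finset α) (hV : V.card = 3 * k)
    (g : Finset α → WTL) (hg : EgalitarianWTL V k g) :
    let S := kslice V k
    let Tr := triples V k k k
    let pX : WTL → ℚ := fun X => ((S.filter (fun x => g x = X)).card : ℚ) / S.card
    let pm : Multiset WTL → ℚ := fun m =>
      ((Tr.filter (fun q => ({g q.1, g q.2.1, g q.2.2} : Multiset WTL) = m)).card : ℚ)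
        / Tr.card
    let b : ℚ := pX W - pX L
    let E : ℚ := pm {W, W, W} + pm {L, L, L} + pm {W, W, T} / 2 + pm {L, L, T} / 2
      + pm {W, T, T} / 6 + pm {L, T, T} / 6
    E ≥ ((1 - pX T) * (5 - 3 * pX T) + 27 * b ^ 2) / 32 := by
  intro S Tr pX pm b E
  have hE : (E : ℝ) = (∑ q ∈ Tr, inconsistency (g q.1) (g q.2.1) (g q.2.2)) / #Tr := by
    simp [E, pm, inconsistency, sum_add_distrib, ← sum_div, sum_boole]
    ring
  have hpX (X : WTL) : (pX X : ℝ) = outcomeFrequency S g X := by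
    simp [pX, outcomeFrequency]
  rw [ge_iff_le, ← Rat.cast_le (K := ℝ), hE]
  push_cast [b, hpX]
  exact le_average_inconsistency hV hg
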